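/- arXiv:2403.19525 — 4 statements merged into one kernel-verified Lean document; each statement's English description precedes it below -/
import Mathlib

section
/- Suppose θ is a substitution such that A ⊢ θ(x) ↔ x for all variables x and ⊢ θ(A) ↔ E where E is variable-free. Then E is the uniform post-interpolant of A with respect to the parameters: E is variable-free, ⊢ A → E, and for every variable-free C with ⊢ A → C we have ⊢ E → C. -/
inductive Form (var par : Type) : Type where
  | bot : Form var par
  | v : var → Form var par
  | p : par → Form var par
  | and : Form var par → Form var par → Form var par
  | or : Form var par → Form var par → Form var par
  | imp : Form var par → Form var par → Form var par

namespace Form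
variable {var par : Type}

def neg (A : Form var par) : Form var par := A.imp .bot
def top : Form var par := Form.neg .bot
def fiff (A B : Form var par) : Form var par := (A.imp B).and (B.imp A)

/-- `varFree A`: `A` contains no variables (it lies in the parameter-only sublanguage). -/
def varFree : Form var par → Prop
  | .bot => True
  | .v _ => False
  | .p _ => True
  | .and A B => varFree A ∧ varFree B
  | .or A B => varFree A ∧ varFree B
  | .imp A B => varFree A ∧ varFree B

/-- Substitutions act on variables, fix parameters, and commute with connectives. -/
def subst (θ : var → Form var par) : Form var par → Form var par
  | .bot => .bot
  | .v x => θ x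
  | .p q => .p q
  | .and A B => (subst θ A).and (subst θ B)
  | .or A B => (subst θ A).or (subst θ B)
  | .imp A B => (subst θ A).imp (subst θ B)

end Form

/-- Hilbert-style provability: `cl = false` is intuitionistic logic (IPC),
`cl = true` is classical logic (CPC). -/
inductive Prv {var par : Type} (cl : Bool) : Form var par → Prop where
  | mp {A B : Form var par} : Prv cl (A.imp B) → Prv cl A → Prv cl B
  | k {A B : Form var par} : Prv cl (A.imp (B.imp A))
  | s {A B C : Form var par} :
      Prv cl ((A.imp (B.imp C)).imp ((A.imp B).imp (A.imp C)))
  | andI {A B : Form var par} : Prv cl (A.imp (B.imp (A.and B)))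
  | andE1 {A B : Form var par} : Prv cl ((A.and B).imp A)
  | andE2 {A B : Form var par} : Prv cl ((A.and B).imp B)
  | orI1 {A B : Form var par} : Prv cl (A.imp (A.or B))
  | orI2 {A B : Form var par} : Prv cl (B.imp (A.or B))
  | orE {A B C : Form var par} :
      Prv cl ((A.imp C).imp ((B.imp C).imp ((A.or B).imp C)))
  | exf {A : Form var par} : Prv cl (Form.bot.imp A)
  | dne {A : Form var par} : cl = true → Prv cl (A.neg.neg.imp A)

/-- `U` is the uniform post-interpolant of `A` with respect to the parameters. -/
def IsUPI {var par : Type} (cl : Bool) (A U : Form var par) : Prop :=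
  U.varFree ∧ Prv cl (A.imp U) ∧
    ∀ C : Form var par, C.varFree → Prv cl (A.imp C) → Prv cl (U.imp C)

section Aux
variable {var par : Type}

theorem Prv.id {cl : Bool} {X : Form var par} : Prv cl (X.imp X) :=
  Prv.mp (Prv.mp (Prv.s (B := X.imp X)) Prv.k) Prv.k

theorem Prv.impTrans {cl : Bool} {X Y Z : Form var par}
    (h1 : Prv cl (X.imp Y)) (h2 : Prv cl (Y.imp Z)) : Prv cl (X.imp Z) :=
  Prv.mp (Prv.mp Prv.s (Prv.mp Prv.k h2)) h1

/-- Provability from a list of hypotheses. -/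
inductive PrvH (cl : Bool) : List (Form var par) → Form var par → Prop
  | hyp {Γ X} : X ∈ Γ → PrvH cl Γ X
  | thm {Γ X} : Prv cl X → PrvH cl Γ X
  | mp {Γ X Y} : PrvH cl Γ (X.imp Y) → PrvH cl Γ X → PrvH cl Γ Y

theorem PrvH.weak {cl : Bool} {Γ Δ : List (Form var par)} {X : Form var par}
    (h : PrvH cl Γ X) (sub : ∀ Y ∈ Γ, Y ∈ Δ) : PrvH cl Δ X := by
  induction h with
  | hyp hm => exact PrvH.hyp (sub _ hm)
  | thm ht => exact PrvH.thm ht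
  | mp _ _ ih1 ih2 => exact PrvH.mp ih1 ih2

theorem PrvH.ded' {cl : Bool} {Δ : List (Form var par)} {X : Form var par}
    (h : PrvH cl Δ X) : ∀ (A : Form var par) Γ, Δ = A :: Γ → PrvH cl Γ (A.imp X) := by
  induction h with
  | hyp hm =>
    intro A Γ hΔ
    subst hΔ
    rcases List.mem_cons.mp hm with h | h
    · subst h; exact PrvH.thm Prv.id
    · exact PrvH.mp (PrvH.thm Prv.k) (PrvH.hyp h)
  | thm ht => intro A Γ _; exact PrvH.mp (PrvH.thm Prv.k) (PrvH.thm ht)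
  | mp _ _ ih1 ih2 =>
    intro A Γ hΔ
    exact PrvH.mp (PrvH.mp (PrvH.thm Prv.s) (ih1 A Γ hΔ)) (ih2 A Γ hΔ)

theorem PrvH.ded {cl : Bool} {Γ : List (Form var par)} {A X : Form var par}
    (h : PrvH cl (A :: Γ) X) : PrvH cl Γ (A.imp X) :=
  h.ded' A Γ rfl

theorem PrvH.toPrv {cl : Bool} {X : Form var par}
    (h : PrvH cl [] X) : Prv cl X := by
  have aux : ∀ {Γ : List (Form var par)} {X : Form var par},
      PrvH cl Γ X → Γ = [] → Prv cl X := by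
    intro Γ X h
    induction h with
    | hyp hm => intro hΓ; subst hΓ; simp at hm
    | thm ht => intro _; exact ht
    | mp _ _ ih1 ih2 => intro hΓ; exact Prv.mp (ih1 hΓ) (ih2 hΓ)
  exact aux h rfl

theorem PrvH.toPrv1 {cl : Bool} {A X : Form var par}
    (h : PrvH cl [A] X) : Prv cl (A.imp X) :=
  h.ded.toPrv

theorem PrvH.mpThm {cl : Bool} {Γ : List (Form var par)} {X Y : Form var par}
    (h : Prv cl (X.imp Y)) (hx : PrvH cl Γ X) : PrvH cl Γ Y :=
  PrvH.mp (PrvH.thm h) hx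

theorem PrvH.andI' {cl : Bool} {Γ : List (Form var par)} {X Y : Form var par}
    (hx : PrvH cl Γ X) (hy : PrvH cl Γ Y) : PrvH cl Γ (X.and Y) :=
  PrvH.mp (PrvH.mpThm Prv.andI hx) hy

theorem PrvH.andE1' {cl : Bool} {Γ : List (Form var par)} {X Y : Form var par}
    (h : PrvH cl Γ (X.and Y)) : PrvH cl Γ X := PrvH.mpThm Prv.andE1 h

theorem PrvH.andE2' {cl : Bool} {Γ : List (Form var par)} {X Y : Form var par}
    (h : PrvH cl Γ (X.and Y)) : PrvH cl Γ Y := PrvH.mpThm Prv.andE2 h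

theorem PrvH.iffRefl {cl : Bool} {Γ : List (Form var par)} {X : Form var par} :
    PrvH cl Γ (X.fiff X) :=
  PrvH.andI' (PrvH.thm Prv.id) (PrvH.thm Prv.id)

theorem PrvH.weak1 {cl : Bool} {Γ : List (Form var par)} {A X : Form var par}
    (h : PrvH cl Γ X) : PrvH cl (A :: Γ) X :=
  h.weak (fun _ hm => List.mem_cons_of_mem _ hm)

theorem PrvH.andCong {cl : Bool} {Γ : List (Form var par)} {P P' Q Q' : Form var par}
    (h1 : PrvH cl Γ (P.fiff P')) (h2 : PrvH cl Γ (Q.fiff Q')) :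
    PrvH cl Γ ((P.and Q).fiff (P'.and Q')) := by
  refine PrvH.andI' (PrvH.ded ?_) (PrvH.ded ?_)
  · have hh : PrvH cl ((P.and Q) :: Γ) (P.and Q) := PrvH.hyp (by simp)
    exact PrvH.andI' (PrvH.mp h1.weak1.andE1' hh.andE1')
      (PrvH.mp h2.weak1.andE1' hh.andE2')
  · have hh : PrvH cl ((P'.and Q') :: Γ) (P'.and Q') := PrvH.hyp (by simp)
    exact PrvH.andI' (PrvH.mp h1.weak1.andE2' hh.andE1')
      (PrvH.mp h2.weak1.andE2' hh.andE2')

theorem PrvH.orHalf {cl : Bool} {Γ : List (Form var par)} {P P' Q Q' : Form var par}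
    (h1 : PrvH cl Γ (P.imp P')) (h2 : PrvH cl Γ (Q.imp Q')) :
    PrvH cl Γ ((P.or Q).imp (P'.or Q')) := by
  refine PrvH.mp (PrvH.mp (PrvH.thm Prv.orE) (PrvH.ded ?_)) (PrvH.ded ?_)
  · exact PrvH.mpThm Prv.orI1 (PrvH.mp h1.weak1 (PrvH.hyp (by simp)))
  · exact PrvH.mpThm Prv.orI2 (PrvH.mp h2.weak1 (PrvH.hyp (by simp)))

theorem PrvH.orCong {cl : Bool} {Γ : List (Form var par)} {P P' Q Q' : Form var par}
    (h1 : PrvH cl Γ (P.fiff P')) (h2 : PrvH cl Γ (Q.fiff Q')) :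
    PrvH cl Γ ((P.or Q).fiff (P'.or Q')) :=
  PrvH.andI' (PrvH.orHalf h1.andE1' h2.andE1') (PrvH.orHalf h1.andE2' h2.andE2')

theorem PrvH.impHalf {cl : Bool} {Γ : List (Form var par)} {P P' Q Q' : Form var par}
    (h1 : PrvH cl Γ (P'.imp P)) (h2 : PrvH cl Γ (Q.imp Q')) :
    PrvH cl Γ ((P.imp Q).imp (P'.imp Q')) := by
  refine PrvH.ded (PrvH.ded ?_)
  have hp' : PrvH cl (P' :: (P.imp Q) :: Γ) P' := PrvH.hyp (by simp)
  have hpq : PrvH cl (P' :: (P.imp Q) :: Γ) (P.imp Q) := PrvH.hyp (by simp)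
  exact PrvH.mp h2.weak1.weak1 (PrvH.mp hpq (PrvH.mp h1.weak1.weak1 hp'))

theorem PrvH.impCong {cl : Bool} {Γ : List (Form var par)} {P P' Q Q' : Form var par}
    (h1 : PrvH cl Γ (P.fiff P')) (h2 : PrvH cl Γ (Q.fiff Q')) :
    PrvH cl Γ ((P.imp Q).fiff (P'.imp Q')) :=
  PrvH.andI' (PrvH.impHalf h1.andE2' h2.andE1') (PrvH.impHalf h1.andE1' h2.andE2')

theorem Prv.substPrv {cl : Bool} {θ : var → Form var par} {X : Form var par}
    (h : Prv cl X) : Prv cl (Form.subst θ X) := by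
  induction h with
  | mp _ _ ih1 ih2 => exact Prv.mp ih1 ih2
  | k => exact Prv.k
  | s => exact Prv.s
  | andI => exact Prv.andI
  | andE1 => exact Prv.andE1
  | andE2 => exact Prv.andE2
  | orI1 => exact Prv.orI1
  | orI2 => exact Prv.orI2
  | orE => exact Prv.orE
  | exf => exact Prv.exf
  | dne hcl => exact Prv.dne hcl

theorem substVarFree {θ : var → Form var par} {C : Form var par}
    (h : C.varFree) : Form.subst θ C = C := by
  induction C with
  | bot => rfl
  | v x => exact absurd h (by simp [Form.varFree])
  | p q => rfl
  | and A B ihA ihB =>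
    simp only [Form.subst]; rw [ihA h.1, ihB h.2]
  | or A B ihA ihB =>
    simp only [Form.subst]; rw [ihA h.1, ihB h.2]
  | imp A B ihA ihB =>
    simp only [Form.subst]; rw [ihA h.1, ihB h.2]

theorem substIff {cl : Bool} {A : Form var par} {θ : var → Form var par}
    (hid : ∀ x : var, Prv cl (A.imp ((θ x).fiff (Form.v x)))) :
    ∀ B : Form var par, PrvH cl [A] ((Form.subst θ B).fiff B) := by
  intro B
  induction B with
  | bot => exact PrvH.iffRefl
  | v x => exact PrvH.mp (PrvH.thm (hid x)) (PrvH.hyp (by simp))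
  | p q => exact PrvH.iffRefl
  | and B C ihB ihC => exact PrvH.andCong ihB ihC
  | or B C ihB ihC => exact PrvH.orCong ihB ihC
  | imp B C ihB ihC => exact PrvH.impCong ihB ihC

end Aux

/-- The projection of a par-projective formula is its uniform post-interpolant. -/
theorem projection_is_upi {var par : Type} (cl : Bool) (A E : Form var par)
    (θ : var → Form var par)
    (hE : E.varFree)
    (hid : ∀ x : var, Prv cl (A.imp ((θ x).fiff (Form.v x))))
    (he : Prv cl ((Form.subst θ A).fiff E)) :
    IsUPI cl A E := by
  refine ⟨hE, ?_, ?_⟩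
  · -- A ⊢ θ(A) from substIff, then θ(A) → E from he
    refine PrvH.toPrv1 ?_
    have hAA := substIff hid A
    have hθA : PrvH cl [A] (Form.subst θ A) :=
      PrvH.mp hAA.andE2' (PrvH.hyp (by simp))
    exact PrvH.mpThm (Prv.mp Prv.andE1 he) hθA
  · intro C hC hAC
    have h1 : Prv cl ((Form.subst θ A).imp (Form.subst θ C)) :=
      Prv.substPrv (θ := θ) hAC
    rw [substVarFree hC] at h1
    exact Prv.impTrans (Prv.mp Prv.andE2 he) h1
end

section
/- Every projective unifier θ of A ↔ U (where U is the uniform post-interpolant of A w.r.t. parameters) is a most general U-fier of A: ⊢ θ(A) ↔ U, and for every substitution γ with ⊢ γ(A) ↔ U there is a substitution λ such that ⊢ γ(x) ↔ λ(θ(x)) for all variables x. -/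
theorem subst_varFree {var par : Type} (θ : var → Form var par) :
    ∀ C : Form var par, C.varFree → Form.subst θ C = C := by
  intro C h
  induction C with
  | bot => rfl
  | v x => exact absurd h (by simp [Form.varFree])
  | p q => rfl
  | and A B ihA ihB => simp [Form.subst, ihA h.1, ihB h.2]
  | or A B ihA ihB => simp [Form.subst, ihA h.1, ihB h.2]
  | imp A B ihA ihB => simp [Form.subst, ihA h.1, ihB h.2]

theorem prv_subst {var par : Type} {cl : Bool} (γ : var → Form var par)
    {B : Form var par} (h : Prv cl B) : Prv cl (Form.subst γ B) := by
  induction h with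
  | mp _ _ ih1 ih2 => exact Prv.mp ih1 ih2
  | k => exact Prv.k
  | s => exact Prv.s
  | andI => exact Prv.andI
  | andE1 => exact Prv.andE1
  | andE2 => exact Prv.andE2
  | orI1 => exact Prv.orI1
  | orI2 => exact Prv.orI2
  | orE => exact Prv.orE
  | exf => exact Prv.exf
  | dne hcl => exact Prv.dne hcl

theorem fiff_symm {var par : Type} {cl : Bool} {B C : Form var par}
    (h : Prv cl (B.fiff C)) : Prv cl (C.fiff B) :=
  Prv.mp (Prv.mp Prv.andI (Prv.mp Prv.andE2 h)) (Prv.mp Prv.andE1 h)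

/-- A projective unifier of `A ↔ U(A)` is a most general `U(A)`-fier of `A`. -/
theorem proj_unifier_most_general {var par : Type} (cl : Bool) (A U : Form var par)
    (θ : var → Form var par)
    (hU : IsUPI cl A U)
    (hu : Prv cl (Form.subst θ (A.fiff U)))
    (hid : ∀ x : var, Prv cl ((A.fiff U).imp ((θ x).fiff (Form.v x)))) :
    Prv cl ((Form.subst θ A).fiff U) ∧
      ∀ γ : var → Form var par, Prv cl ((Form.subst γ A).fiff U) →
        ∃ lam : var → Form var par,
          ∀ x : var, Prv cl ((γ x).fiff (Form.subst lam (θ x))) := by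
  have hsub : ∀ (σ : var → Form var par) (B C : Form var par),
      Form.subst σ (B.fiff C) = (Form.subst σ B).fiff (Form.subst σ C) := by
    intro σ B C; rfl
  constructor
  · have := hu
    rw [hsub, subst_varFree θ U hU.1] at this
    exact this
  · intro γ hγ
    refine ⟨γ, fun x => ?_⟩
    have h1 := prv_subst γ (hid x)
    have heq : Form.subst γ ((A.fiff U).imp ((θ x).fiff (Form.v x)))
        = ((Form.subst γ A).fiff (Form.subst γ U)).imp
          ((Form.subst γ (θ x)).fiff (γ x)) := rfl
    rw [heq, subst_varFree γ U hU.1] at h1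
    exact fiff_symm (Prv.mp h1 hγ)
end

section
/- In classical propositional logic, every formula A is par-projective: there exist a variable-free formula E and a substitution θ fixing parameters such that ⊢ θ(A) ↔ E and A ⊢ θ(x) ↔ x for all variables x. Moreover U(A) → A is projective, where U(A) is the uniform post-interpolant of A w.r.t. the parameters. -/
/-!
Löwenheim's elimination of one variable at a time. For a variable `x` of `B` put
`t = (B[⊥/x] → x) ∧ B[⊤/x]`. Wherever `B` is true, `t` has the truth value of `x`, and `B[t/x]`
is equivalent to `∃x. B = B[⊤/x] ∨ B[⊥/x]`, which has one variable fewer. Composing these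
substitutions over the variables of `A` gives `θ` with `θ(A) ↔ E` for a variable-free `E` and
`A ⊨ θ(x) ↔ x`. Both are tautologies, hence provable by Kalmár's completeness argument.

For the second claim apply this to `U → A`: then `A ⊢ E`, so `U ⊢ E` because `U` is the uniform
post-interpolant, and as `θ(U → A) = U → θ(A)` the substitution `θ` unifies `U → A`.
-/
namespace Form

variable {var par : Type}

def atom : var ⊕ par → Form var par
  | .inl x => v x
  | .inr a => p a

def atoms : Form var par → List (var ⊕ par)
  | bot => []
  | v x => [.inl x]
  | p a => [.inr a]
  | and A B | or A B | imp A B => atoms A ++ atoms B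

@[simp]
def eval (val : var ⊕ par → Prop) : Form var par → Prop
  | bot => False
  | v x => val (.inl x)
  | p a => val (.inr a)
  | and A B => eval val A ∧ eval val B
  | or A B => eval val A ∨ eval val B
  | imp A B => eval val A → eval val B

@[simp]
theorem eval_atom (val : var ⊕ par → Prop) (a : var ⊕ par) : (atom a).eval val = val a := by
  cases a <;> rfl

@[simp]
theorem eval_top (val : var ⊕ par → Prop) : (top : Form var par).eval val :=
  id

@[simp]
theorem eval_fiff (val : var ⊕ par → Prop) (A B : Form var par) :
    (A.fiff B).eval val ↔ (A.eval val ↔ B.eval val) :=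
  iff_iff_implies_and_implies.symm

theorem varFree_of_atoms (A : Form var par) (h : ∀ x, .inl x ∉ A.atoms) : A.varFree := by
  induction A <;> simp_all [atoms, varFree]

theorem subst_of_varFree (θ : var → Form var par) {A : Form var par} (h : A.varFree) :
    A.subst θ = A := by
  induction A <;> simp_all [subst, varFree]

theorem subst_v (A : Form var par) : A.subst v = A := by
  induction A <;> simp_all [subst]

theorem subst_subst (σ τ : var → Form var par) (A : Form var par) :
    (A.subst τ).subst σ = A.subst fun x => (τ x).subst σ := by
  induction A <;> simp_all [subst]

theorem eval_subst (θ : var → Form var par) (val : var ⊕ par → Prop) (A : Form var par) :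
    (A.subst θ).eval val = A.eval (Sum.elim (fun x => (θ x).eval val) (val ∘ .inr)) := by
  induction A <;> simp_all [subst]

theorem eval_subst_of_forall {θ : var → Form var par} {val : var ⊕ par → Prop}
    (h : ∀ x, (θ x).eval val ↔ val (.inl x)) (A : Form var par) :
    (A.subst θ).eval val ↔ A.eval val := by
  have : Sum.elim (fun x => (θ x).eval val) (val ∘ .inr) = val := by
    funext a
    cases a with
    | inl x => exact propext (h x)
    | inr a => rfl
  rw [eval_subst, this]

section update

variable [DecidableEq var]

theorem mem_atoms_subst_update {x y : var} {s : Form var par} (hs : s.atoms = [])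
    {B : Form var par} (h : .inl y ∈ (B.subst (Function.update v x s)).atoms) :
    y ≠ x ∧ .inl y ∈ B.atoms := by
  induction B with
  | v z =>
    by_cases hz : z = x
    · simp_all [subst]
    · simp_all [subst, atoms]
  | _ => simp_all [subst, atoms] <;> tauto

theorem eval_subst_update_congr {x : var} {s s' : Form var par} {val : var ⊕ par → Prop}
    (h : s.eval val ↔ s'.eval val) (B : Form var par) :
    (B.subst (Function.update v x s)).eval val ↔ (B.subst (Function.update v x s')).eval val := by
  induction B with
  | v z => by_cases hz : z = x <;> simp_all [subst]
  | _ => simp_all [subst]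

theorem eval_subst_update (x : var) (s B : Form var par) (val : var ⊕ par → Prop) :
    (B.subst (Function.update v x s)).eval val ↔
      s.eval val ∧ (B.subst (Function.update v x top)).eval val ∨
        ¬s.eval val ∧ (B.subst (Function.update v x bot)).eval val := by
  by_cases hs : s.eval val
  · simpa [hs] using eval_subst_update_congr (x := x) (s' := top) (val := val) (by simpa) B
  · simpa [hs] using eval_subst_update_congr (x := x) (s' := bot) (val := val) (by simpa) B

def existsVar (x : var) (B : Form var par) : Form var par :=
  (B.subst (Function.update v x top)).or (B.subst (Function.update v x bot))

def existsWitness (x : var) (B : Form var par) : Form var par :=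
  ((B.subst (Function.update v x bot)).imp (v x)).and (B.subst (Function.update v x top))

theorem eval_existsVar_of_eval {x : var} {B : Form var par} {val : var ⊕ par → Prop}
    (hB : B.eval val) : (B.existsVar x).eval val := by
  have := eval_subst_update x (v x) B val
  rw [Function.update_eq_self, subst_v] at this
  simp only [existsVar, eval]
  tauto

theorem eval_existsWitness_iff {x : var} {B : Form var par} {val : var ⊕ par → Prop}
    (hB : B.eval val) : (B.existsWitness x).eval val ↔ val (.inl x) := by
  have := eval_subst_update x (v x) B val
  rw [Function.update_eq_self, subst_v] at this
  simp only [existsWitness, eval]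
  tauto

theorem eval_subst_existsWitness (x : var) (B : Form var par) (val : var ⊕ par → Prop) :
    (B.subst (Function.update v x (B.existsWitness x))).eval val ↔ (B.existsVar x).eval val := by
  rw [eval_subst_update]
  simp only [existsVar, existsWitness, eval]
  tauto

theorem mem_atoms_existsVar {x y : var} {B : Form var par} (h : .inl y ∈ (B.existsVar x).atoms) :
    y ≠ x ∧ .inl y ∈ B.atoms := by
  rw [existsVar, atoms, List.mem_append] at h
  exact h.elim (mem_atoms_subst_update rfl) (mem_atoms_subst_update rfl)

end update

theorem exists_varFree_subst_eval_iff (B : Form var par) :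
    ∃ (E : Form var par) (θ : var → Form var par), E.varFree ∧
      (∀ val, (B.subst θ).eval val ↔ E.eval val) ∧
      ∀ val, B.eval val → ∀ x, (θ x).eval val ↔ val (.inl x) := by
  classical
  suffices h : ∀ (L : List var) (B : Form var par), (∀ x, .inl x ∈ B.atoms → x ∈ L) →
      ∃ (E : Form var par) (θ : var → Form var par), E.varFree ∧
        (∀ val, (B.subst θ).eval val ↔ E.eval val) ∧
        ∀ val, B.eval val → ∀ x, (θ x).eval val ↔ val (.inl x) from
    h (B.atoms.filterMap Sum.getLeft?) B fun x hx => List.mem_filterMap.2 ⟨_, hx, rfl⟩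
  intro L
  induction L with
  | nil =>
    intro B hB
    exact ⟨B, v, varFree_of_atoms B fun x hx => List.not_mem_nil (hB x hx),
      fun val => by rw [subst_v], fun _ _ _ => Iff.rfl⟩
  | cons x L ih =>
    intro B hB
    obtain ⟨E, σ, hE, hσE, hσ⟩ := ih (B.existsVar x) fun y hy =>
      have ⟨hyx, hyB⟩ := mem_atoms_existsVar hy
      (List.mem_cons.1 (hB y hyB)).resolve_left hyx
    refine ⟨E, fun y => (Function.update v x (B.existsWitness x) y).subst σ, hE,
      fun val => ?_, fun val hval y => ?_⟩
    · rw [← subst_subst, eval_subst, eval_subst_existsWitness, ← eval_subst, hσE]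
    · rw [eval_subst_of_forall (hσ val (eval_existsVar_of_eval hval))]
      by_cases hy : y = x
      · subst hy
        rw [Function.update_self]
        exact eval_existsWitness_iff hval
      · rw [Function.update_of_ne hy]
        rfl

end Form

section Deduction

variable {var par : Type} {cl : Bool}

theorem Prv.imp_self {A : Form var par} : Prv cl (A.imp A) :=
  Prv.mp (Prv.mp (Prv.s (B := A.imp A)) Prv.k) Prv.k

theorem Prv.sound {A : Form var par} (h : Prv cl A) (val : var ⊕ par → Prop) : A.eval val := by
  induction h with
  | mp _ _ ih₁ ih₂ => exact ih₁ ih₂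
  | dne => exact fun h => Classical.byContradiction h
  | _ => simp only [Form.eval]; tauto

/-- `Entails cl [B₁, …, Bₙ] A` is `⊢ Bₙ → ⋯ → B₁ → A`, so the deduction theorem holds by
definition. -/
def Entails (cl : Bool) : List (Form var par) → Form var par → Prop
  | [], A => Prv cl A
  | B :: Γ, A => Entails cl Γ (B.imp A)

namespace Entails

variable {Γ : List (Form var par)} {A B : Form var par}

theorem of_prv (h : Prv cl A) : Entails cl Γ A := by
  induction Γ generalizing A with
  | nil => exact h
  | cons B Γ ih => exact ih (Prv.mp Prv.k h)

theorem mp (h₁ : Entails cl Γ (A.imp B)) (h₂ : Entails cl Γ A) : Entails cl Γ B := by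
  induction Γ generalizing A B with
  | nil => exact Prv.mp h₁ h₂
  | cons C Γ ih => exact ih (ih (of_prv Prv.s) h₁) h₂

theorem head : Entails cl (A :: Γ) A :=
  of_prv (Γ := Γ) Prv.imp_self

theorem cons (h : Entails cl Γ A) : Entails cl (B :: Γ) A :=
  mp (Γ := Γ) (of_prv Prv.k) h

theorem and_intro (h₁ : Entails cl Γ A) (h₂ : Entails cl Γ B) : Entails cl Γ (A.and B) :=
  mp (mp (of_prv Prv.andI) h₁) h₂

theorem not_and_left (h : Entails cl Γ A.neg) : Entails cl Γ (A.and B).neg :=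
  mp (Γ := (A.and B) :: Γ) h.cons (mp (of_prv Prv.andE1) head)

theorem not_and_right (h : Entails cl Γ B.neg) : Entails cl Γ (A.and B).neg :=
  mp (Γ := (A.and B) :: Γ) h.cons (mp (of_prv Prv.andE2) head)

theorem or_inl (h : Entails cl Γ A) : Entails cl Γ (A.or B) :=
  mp (of_prv Prv.orI1) h

theorem or_inr (h : Entails cl Γ B) : Entails cl Γ (A.or B) :=
  mp (of_prv Prv.orI2) h

theorem not_or (h₁ : Entails cl Γ A.neg) (h₂ : Entails cl Γ B.neg) : Entails cl Γ (A.or B).neg :=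
  mp (mp (of_prv Prv.orE) h₁) h₂

theorem imp_of_not (h : Entails cl Γ A.neg) : Entails cl Γ (A.imp B) :=
  mp (Γ := A :: Γ) (of_prv Prv.exf) (mp h.cons head)

theorem imp_of_right (h : Entails cl Γ B) : Entails cl Γ (A.imp B) :=
  h.cons

theorem not_imp (h₁ : Entails cl Γ A) (h₂ : Entails cl Γ B.neg) : Entails cl Γ (A.imp B).neg :=
  mp (Γ := A.imp B :: Γ) h₂.cons (mp head h₁.cons)

theorem by_cases (h₁ : Entails true (A :: Γ) B) (h₂ : Entails true (A.neg :: Γ) B) :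
    Entails true Γ B := by
  have hnA : Entails true (B.neg :: Γ) A.neg :=
    mp (Γ := A :: B.neg :: Γ) head.cons (show Entails true Γ (A.imp B) from h₁).cons
  have hB : Entails true (B.neg :: Γ) B :=
    mp (show Entails true Γ (A.neg.imp B) from h₂).cons hnA
  exact mp (of_prv (Prv.dne rfl)) (mp (Γ := B.neg :: Γ) head hB)

end Entails

def Settles (cl : Bool) (val : var ⊕ par → Prop) (Γ : List (Form var par)) (A : Form var par) :
    Prop :=
  (A.eval val → Entails cl Γ A) ∧ (¬A.eval val → Entails cl Γ A.neg)

namespace Settles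

variable {val : var ⊕ par → Prop} {Γ : List (Form var par)}

theorem cons {A B : Form var par} (h : Settles cl val Γ A) : Settles cl val (B :: Γ) A :=
  ⟨fun hA => (h.1 hA).cons, fun hA => (h.2 hA).cons⟩

/-- Kalmár's lemma. -/
theorem of_atoms {A : Form var par} (h : ∀ a ∈ A.atoms, Settles cl val Γ (Form.atom a)) :
    Settles cl val Γ A := by
  induction A with
  | bot => exact ⟨False.elim, fun _ => Entails.of_prv Prv.imp_self⟩
  | v x => exact h (.inl x) (List.mem_singleton_self _)
  | p a => exact h (.inr a) (List.mem_singleton_self _)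
  | and A B ihA ihB =>
    simp only [Form.atoms, List.mem_append] at h
    obtain ⟨hA, hA'⟩ := ihA fun a ha => h a (.inl ha)
    obtain ⟨hB, hB'⟩ := ihB fun a ha => h a (.inr ha)
    refine ⟨fun hAB => Entails.and_intro (hA hAB.1) (hB hAB.2), fun hAB => ?_⟩
    by_cases hAv : A.eval val
    · exact Entails.not_and_right (hB' fun hBv => hAB ⟨hAv, hBv⟩)
    · exact Entails.not_and_left (hA' hAv)
  | or A B ihA ihB =>
    simp only [Form.atoms, List.mem_append] at h
    obtain ⟨hA, hA'⟩ := ihA fun a ha => h a (.inl ha)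
    obtain ⟨hB, hB'⟩ := ihB fun a ha => h a (.inr ha)
    refine ⟨fun hAB => hAB.elim (Entails.or_inl ∘ hA) (Entails.or_inr ∘ hB), fun hAB => ?_⟩
    exact Entails.not_or (hA' fun hAv => hAB (.inl hAv)) (hB' fun hBv => hAB (.inr hBv))
  | imp A B ihA ihB =>
    simp only [Form.atoms, List.mem_append] at h
    obtain ⟨hA, hA'⟩ := ihA fun a ha => h a (.inl ha)
    obtain ⟨hB, hB'⟩ := ihB fun a ha => h a (.inr ha)
    refine ⟨fun hAB => ?_, fun hAB => ?_⟩
    · by_cases hAv : A.eval val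
      · exact Entails.imp_of_right (hB (hAB hAv))
      · exact Entails.imp_of_not (hA' hAv)
    · exact Entails.not_imp (hA (Classical.not_imp.1 hAB).1) (hB' (Classical.not_imp.1 hAB).2)

end Settles

/-- Starting from Kalmár's lemma, discharge the atoms of a tautology one at a time by excluded
middle. -/
theorem Prv.complete {A : Form var par} (hA : ∀ val, A.eval val) : Prv true A := by
  classical
  suffices h : ∀ (L : List (var ⊕ par)) (Γ : List (Form var par)) (val : var ⊕ par → Prop),
      (∀ a ∈ A.atoms, a ∉ L → Settles true val Γ (Form.atom a)) → Entails true Γ A from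
    h A.atoms [] (fun _ => True) fun a ha haL => absurd ha haL
  intro L
  induction L with
  | nil => exact fun Γ val h => (Settles.of_atoms fun a ha => h a ha List.not_mem_nil).1 (hA val)
  | cons a L ih =>
    intro Γ val h
    have branch : ∀ (P : Prop) (C : Form var par),
        Settles true (Function.update val a P) (C :: Γ) (Form.atom a) → Entails true (C :: Γ) A :=
      fun P C hC => ih _ (Function.update val a P) fun b hb hbL => by
        by_cases hba : b = a
        · subst hba
          exact hC
        · have hb := (h b hb (List.not_mem_cons_of_ne_of_not_mem hba hbL)).cons (B := C)
          simpa only [Settles, Form.eval_atom, Function.update_of_ne hba] using hb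
    exact Entails.by_cases
      (branch True _ ⟨fun _ => Entails.head, by simp⟩)
      (branch False _ ⟨by simp, fun _ => Entails.head⟩)

end Deduction

/-- In classical logic every formula is par-projective; moreover `U(A) → A` is projective. -/
theorem classical_all_par_projective {var par : Type} (A : Form var par) :
    (∃ (E : Form var par) (θ : var → Form var par), E.varFree ∧
        Prv true ((Form.subst θ A).fiff E) ∧
        ∀ x : var, Prv true (A.imp ((θ x).fiff (Form.v x)))) ∧
    (∀ U : Form var par, IsUPI true A U →
      ∃ θ : var → Form var par, Prv true (Form.subst θ (U.imp A)) ∧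
        ∀ x : var, Prv true ((U.imp A).imp ((θ x).fiff (Form.v x)))) := by
  constructor
  · obtain ⟨E, θ, hE, hθE, hθ⟩ := A.exists_varFree_subst_eval_iff
    exact ⟨E, θ, hE, Prv.complete fun val => by simpa using hθE val,
      fun x => Prv.complete fun val hA => by simpa using hθ val hA x⟩
  · rintro U ⟨hU, -, hU_least⟩
    obtain ⟨E, θ, hE, hθE, hθ⟩ := (U.imp A).exists_varFree_subst_eval_iff
    -- Wherever `A` holds so does `U → A`, and there `θ` acts as the identity.
    have hAE : Prv true (A.imp E) := Prv.complete fun val hA =>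
      (hθE val).1 ((Form.eval_subst_of_forall (hθ val fun _ => hA) _).2 fun _ => hA)
    have hUE := (hU_least E hE hAE).sound
    refine ⟨θ, Prv.complete fun val hUval => ?_,
      fun x => Prv.complete fun val hB => by simpa using hθ val hB x⟩
    exact (hθE val).2 (hUE val (by rwa [Form.subst_of_varFree θ hU] at hUval)) hUval
end

section
/- The unification type of any extension of classical propositional logic by a variable-free axiom E is unitary: for every formula A, if E → A is unifiable (⊢ θ(E → A) for some substitution θ), then there is a single unifier more general than every other unifier of E → A. -/
section Aux
variable {var par : Type}
open Form

/-- Context implication. -/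
def ctx (Γ : List (Form var par)) (A : Form var par) : Form var par :=
  Γ.foldr .imp A

/-- Derivability from hypotheses. -/
def Der (Γ : List (Form var par)) (A : Form var par) : Prop :=
  Prv true (ctx Γ A)

theorem prv_id (A : Form var par) : Prv true (A.imp A) :=
  Prv.mp (Prv.mp (Prv.s (B := A.imp A)) Prv.k) Prv.k

theorem prv_trans {A B C : Form var par} (h1 : Prv true (A.imp B))
    (h2 : Prv true (B.imp C)) : Prv true (A.imp C) :=
  Prv.mp (Prv.mp Prv.s (Prv.mp Prv.k h2)) h1

theorem prv_lift {A B : Form var par} (C : Form var par)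
    (h : Prv true (A.imp B)) : Prv true ((C.imp A).imp (C.imp B)) :=
  Prv.mp Prv.s (Prv.mp Prv.k h)

theorem prv_swap {A B C : Form var par} (h : Prv true (A.imp (B.imp C))) :
    Prv true (B.imp (A.imp C)) :=
  prv_trans Prv.k (Prv.mp Prv.s h)

theorem swap_thm {A B C : Form var par} :
    Prv true ((A.imp (B.imp C)).imp (B.imp (A.imp C))) :=
  prv_swap (prv_trans Prv.k (prv_swap Prv.s))

theorem ctx_s {Γ : List (Form var par)} {A B : Form var par} :
    Prv true ((ctx Γ (A.imp B)).imp ((ctx Γ A).imp (ctx Γ B))) := by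
  induction Γ with
  | nil => exact prv_id _
  | cons C Γ ih => exact prv_trans (prv_lift C ih) Prv.s

theorem Der.ofPrv {Γ : List (Form var par)} {A : Form var par}
    (h : Prv true A) : Der Γ A := by
  induction Γ with
  | nil => exact h
  | cons C Γ ih => exact Prv.mp Prv.k ih

theorem Der.mp {Γ : List (Form var par)} {A B : Form var par}
    (h1 : Der Γ (A.imp B)) (h2 : Der Γ A) : Der Γ B :=
  Prv.mp (Prv.mp ctx_s h1) h2

theorem Der.hyp_head {Γ : List (Form var par)} {A : Form var par} :
    Der (A :: Γ) A := by
  induction Γ with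
  | nil => exact prv_id A
  | cons C Γ ih => exact prv_trans ih Prv.k

theorem Der.weak {Γ : List (Form var par)} {A : Form var par}
    (C : Form var par) (h : Der Γ A) : Der (C :: Γ) A :=
  Prv.mp Prv.k h

theorem intro_thm {Γ : List (Form var par)} {A B : Form var par} :
    Prv true ((A.imp (ctx Γ B)).imp (ctx Γ (A.imp B))) := by
  induction Γ with
  | nil => exact prv_id _
  | cons C Γ ih => exact prv_trans swap_thm (prv_lift C ih)

theorem Der.intro {Γ : List (Form var par)} {A B : Form var par}
    (h : Der (A :: Γ) B) : Der Γ (A.imp B) :=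
  Prv.mp intro_thm h

theorem Der.andI' {Γ : List (Form var par)} {A B : Form var par}
    (h1 : Der Γ A) (h2 : Der Γ B) : Der Γ (A.and B) :=
  Der.mp (Der.mp (Der.ofPrv Prv.andI) h1) h2

theorem Der.and1 {Γ : List (Form var par)} {A B : Form var par}
    (h : Der Γ (A.and B)) : Der Γ A :=
  Der.mp (Der.ofPrv Prv.andE1) h

theorem Der.and2 {Γ : List (Form var par)} {A B : Form var par}
    (h : Der Γ (A.and B)) : Der Γ B :=
  Der.mp (Der.ofPrv Prv.andE2) h

theorem Der.fiff_intro {Γ : List (Form var par)} {A B : Form var par}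
    (h1 : Der Γ (A.imp B)) (h2 : Der Γ (B.imp A)) : Der Γ (A.fiff B) :=
  Der.andI' h1 h2

theorem Der.fiff_mp {Γ : List (Form var par)} {A B : Form var par}
    (h : Der Γ (A.fiff B)) (h2 : Der Γ A) : Der Γ B :=
  Der.mp (Der.and1 h) h2

theorem Der.fiff_mpr {Γ : List (Form var par)} {A B : Form var par}
    (h : Der Γ (A.fiff B)) (h2 : Der Γ B) : Der Γ A :=
  Der.mp (Der.and2 h) h2

theorem Der.fiff_refl {Γ : List (Form var par)} (A : Form var par) :
    Der Γ (A.fiff A) :=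
  Der.fiff_intro (Der.ofPrv (prv_id A)) (Der.ofPrv (prv_id A))

theorem Der.fiff_symm {Γ : List (Form var par)} {A B : Form var par}
    (h : Der Γ (A.fiff B)) : Der Γ (B.fiff A) :=
  Der.fiff_intro (Der.and2 h) (Der.and1 h)

/-- Excluded middle. -/
theorem Der.em {Γ : List (Form var par)} (A : Form var par) :
    Der Γ (A.or A.neg) := by
  have hh : Der [(A.or A.neg).neg] Form.bot := by
    have hN : Der [(A.or A.neg).neg] (A.or A.neg).neg := Der.hyp_head
    have hnA : Der [(A.or A.neg).neg] A.neg := by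
      refine Der.intro ?_
      have hA : Der [A, (A.or A.neg).neg] A := Der.hyp_head
      have hor : Der [A, (A.or A.neg).neg] (A.or A.neg) :=
        Der.mp (Der.ofPrv Prv.orI1) hA
      exact Der.mp (Der.weak _ hN) hor
    have hor2 : Der [(A.or A.neg).neg] (A.or A.neg) :=
      Der.mp (Der.ofPrv Prv.orI2) hnA
    exact Der.mp hN hor2
  have h2 : Prv true ((A.or A.neg).neg.neg) := Der.intro hh
  exact Der.ofPrv (Prv.mp (Prv.dne rfl) h2)

/-- Classical case split. -/
theorem Der.cases {Γ : List (Form var par)} {A C : Form var par}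
    (h1 : Der (A :: Γ) C) (h2 : Der (A.neg :: Γ) C) : Der Γ C :=
  Der.mp (Der.mp (Der.mp (Der.ofPrv Prv.orE) (Der.intro h1)) (Der.intro h2))
    (Der.em A)

theorem Der.exf' {Γ : List (Form var par)} {A : Form var par}
    (h : Der Γ Form.bot) : Der Γ A :=
  Der.mp (Der.ofPrv Prv.exf) h

/-- Congruence lemmas for iff. -/
theorem Der.imp_congr {Γ : List (Form var par)} {A A' B B' : Form var par}
    (hA : Der Γ (A.fiff A')) (hB : Der Γ (B.fiff B')) :
    Der Γ ((A.imp B).fiff (A'.imp B')) := by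
  refine Der.fiff_intro ?_ ?_
  · refine Der.intro (Der.intro ?_)
    have hA' : Der (A' :: (A.imp B) :: Γ) A' := Der.hyp_head
    have hAB : Der (A' :: (A.imp B) :: Γ) (A.imp B) := Der.weak _ Der.hyp_head
    have hAiff := Der.weak A' (Der.weak (A.imp B) hA)
    have hBiff := Der.weak A' (Der.weak (A.imp B) hB)
    exact Der.fiff_mp hBiff (Der.mp hAB (Der.fiff_mpr hAiff hA'))
  · refine Der.intro (Der.intro ?_)
    have hA' : Der (A :: (A'.imp B') :: Γ) A := Der.hyp_head
    have hAB : Der (A :: (A'.imp B') :: Γ) (A'.imp B') := Der.weak _ Der.hyp_head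
    have hAiff := Der.weak A (Der.weak (A'.imp B') hA)
    have hBiff := Der.weak A (Der.weak (A'.imp B') hB)
    exact Der.fiff_mpr hBiff (Der.mp hAB (Der.fiff_mp hAiff hA'))

theorem Der.and_congr {Γ : List (Form var par)} {A A' B B' : Form var par}
    (hA : Der Γ (A.fiff A')) (hB : Der Γ (B.fiff B')) :
    Der Γ ((A.and B).fiff (A'.and B')) := by
  refine Der.fiff_intro ?_ ?_
  · refine Der.intro ?_
    have hab : Der ((A.and B) :: Γ) (A.and B) := Der.hyp_head
    exact Der.andI' (Der.fiff_mp (Der.weak _ hA) (Der.and1 hab))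
      (Der.fiff_mp (Der.weak _ hB) (Der.and2 hab))
  · refine Der.intro ?_
    have hab : Der ((A'.and B') :: Γ) (A'.and B') := Der.hyp_head
    exact Der.andI' (Der.fiff_mpr (Der.weak _ hA) (Der.and1 hab))
      (Der.fiff_mpr (Der.weak _ hB) (Der.and2 hab))

theorem Der.or_congr {Γ : List (Form var par)} {A A' B B' : Form var par}
    (hA : Der Γ (A.fiff A')) (hB : Der Γ (B.fiff B')) :
    Der Γ ((A.or B).fiff (A'.or B')) := by
  refine Der.fiff_intro ?_ ?_
  · refine Der.intro ?_
    have hor : Der ((A.or B) :: Γ) (A.or B) := Der.hyp_head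
    have c1 : Der ((A.or B) :: Γ) (A.imp (A'.or B')) := by
      refine Der.intro ?_
      exact Der.mp (Der.ofPrv Prv.orI1)
        (Der.fiff_mp (Der.weak _ (Der.weak _ hA)) Der.hyp_head)
    have c2 : Der ((A.or B) :: Γ) (B.imp (A'.or B')) := by
      refine Der.intro ?_
      exact Der.mp (Der.ofPrv Prv.orI2)
        (Der.fiff_mp (Der.weak _ (Der.weak _ hB)) Der.hyp_head)
    exact Der.mp (Der.mp (Der.mp (Der.ofPrv Prv.orE) c1) c2) hor
  · refine Der.intro ?_
    have hor : Der ((A'.or B') :: Γ) (A'.or B') := Der.hyp_head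
    have c1 : Der ((A'.or B') :: Γ) (A'.imp (A.or B)) := by
      refine Der.intro ?_
      exact Der.mp (Der.ofPrv Prv.orI1)
        (Der.fiff_mpr (Der.weak _ (Der.weak _ hA)) Der.hyp_head)
    have c2 : Der ((A'.or B') :: Γ) (B'.imp (A.or B)) := by
      refine Der.intro ?_
      exact Der.mp (Der.ofPrv Prv.orI2)
        (Der.fiff_mpr (Der.weak _ (Der.weak _ hB)) Der.hyp_head)
    exact Der.mp (Der.mp (Der.mp (Der.ofPrv Prv.orE) c1) c2) hor

/-- Substitution preserves provability. -/
theorem subst_prv {A : Form var par} (τ : var → Form var par)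
    (h : Prv true A) : Prv true (Form.subst τ A) := by
  induction h with
  | mp _ _ ih1 ih2 => exact Prv.mp ih1 ih2
  | k => exact Prv.k
  | s => exact Prv.s
  | andI => exact Prv.andI
  | andE1 => exact Prv.andE1
  | andE2 => exact Prv.andE2
  | orI1 => exact Prv.orI1
  | orI2 => exact Prv.orI2
  | orE => exact Prv.orE
  | exf => exact Prv.exf
  | dne hcl => exact Prv.dne hcl

theorem subst_id (A : Form var par) : Form.subst Form.v A = A := by
  induction A <;> simp [Form.subst, *]

/-- Replacement: pointwise equivalent substitutions give equivalent results. -/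
theorem Der.repl {Γ : List (Form var par)} {θ σ : var → Form var par}
    (h : ∀ x, Der Γ ((θ x).fiff (σ x))) (D : Form var par) :
    Der Γ ((Form.subst θ D).fiff (Form.subst σ D)) := by
  induction D with
  | bot => exact Der.fiff_refl _
  | v x => exact h x
  | p q => exact Der.fiff_refl _
  | and A B ihA ihB => exact Der.and_congr ihA ihB
  | or A B ihA ihB => exact Der.or_congr ihA ihB
  | imp A B ihA ihB => exact Der.imp_congr ihA ihB

end Aux

/-- Unification in extensions of classical logic by a variable-free axiom `E`
is unitary: any unifiable `E → A` has a most general unifier. -/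
theorem classical_par_extension_unitary {var par : Type} (E A : Form var par)
    (hE : E.varFree)
    (h : ∃ γ : var → Form var par, Prv true (Form.subst γ (E.imp A))) :
    ∃ θ : var → Form var par, Prv true (Form.subst θ (E.imp A)) ∧
      ∀ τ : var → Form var par, Prv true (Form.subst τ (E.imp A)) →
        ∃ lam : var → Form var par,
          ∀ x : var, Prv true ((τ x).fiff (Form.subst lam (θ x))) := by
  classical
  obtain ⟨γ, hγ⟩ := h
  set B : Form var par := E.imp A with hB
  -- Löwenheim substitution
  set θ : var → Form var par :=
    fun x => (B.imp (.v x)).and (B.neg.imp (γ x)) with hθ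
  -- Under hypothesis B, θ x ↔ x
  have claim1 : ∀ x, Der [B] ((θ x).fiff (.v x)) := by
    intro x
    refine Der.fiff_intro ?_ ?_
    · refine Der.intro ?_
      have h1 : Der [θ x, B] (θ x) := Der.hyp_head
      have hBB : Der [θ x, B] B := Der.weak _ Der.hyp_head
      exact Der.mp (Der.and1 h1) hBB
    · refine Der.intro ?_
      refine Der.andI' ?_ ?_
      · exact Der.intro (Der.weak _ Der.hyp_head)
      · refine Der.intro ?_
        have hnB : Der [B.neg, .v x, B] B.neg := Der.hyp_head
        have hBB : Der [B.neg, .v x, B] B := Der.weak _ (Der.weak _ Der.hyp_head)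
        exact Der.exf' (Der.mp hnB hBB)
  -- Under hypothesis ¬B, θ x ↔ γ x
  have claim2 : ∀ x, Der [B.neg] ((θ x).fiff (γ x)) := by
    intro x
    refine Der.fiff_intro ?_ ?_
    · refine Der.intro ?_
      have h1 : Der [θ x, B.neg] (θ x) := Der.hyp_head
      have hnB : Der [θ x, B.neg] B.neg := Der.weak _ Der.hyp_head
      exact Der.mp (Der.and2 h1) hnB
    · refine Der.intro ?_
      refine Der.andI' ?_ ?_
      · refine Der.intro ?_
        have hBB : Der [B, γ x, B.neg] B := Der.hyp_head
        have hnB : Der [B, γ x, B.neg] B.neg :=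
          Der.weak _ (Der.weak _ Der.hyp_head)
        exact Der.exf' (Der.mp hnB hBB)
      · exact Der.intro (Der.weak _ Der.hyp_head)
  -- θ is a unifier
  have hunif : Prv true (Form.subst θ B) := by
    refine Der.cases (Γ := []) (A := B) ?_ ?_
    · have := Der.repl claim1 B
      rw [subst_id] at this
      exact Der.fiff_mpr this Der.hyp_head
    · have := Der.repl claim2 B
      exact Der.fiff_mpr this (Der.ofPrv hγ)
  refine ⟨θ, hunif, ?_⟩
  intro τ hτ
  refine ⟨τ, fun x => ?_⟩
  have h1 : Prv true (B.imp ((θ x).fiff (.v x))) := claim1 x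
  have h2 : Prv true ((Form.subst τ B).imp
      ((Form.subst τ (θ x)).fiff (τ x))) := subst_prv τ h1
  have h3 : Prv true ((Form.subst τ (θ x)).fiff (τ x)) := Prv.mp h2 hτ
  exact Der.fiff_symm (Γ := []) h3
end
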